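/- Let f, g and h be entire functions given by everywhere absolutely convergent vector valued Dirichlet series, and let p ≥ 0, q ≥ 0, m ≥ 0 be integers. Assume 0 < λ_h^{(m,q)}(f) ≤ ρ_h^{(m,q)}(f) < +∞ and 0 < λ_h^{(m,p)}(g) ≤ ρ_h^{(m,p)}(g) < +∞. Then λ_h^{(m,q)}(f)/ρ_h^{(m,p)}(g) ≤ λ_g^{(p,q)}(f) ≤ min{ λ_h^{(m,q)}(f)/λ_h^{(m,p)}(g), ρ_h^{(m,q)}(f)/ρ_h^{(m,p)}(g) } ≤ max{ λ_h^{(m,q)}(f)/λ_h^{(m,p)}(g), ρ_h^{(m,q)}(f)/ρ_h^{(m,p)}(g) } ≤ ρ_g^{(p,q)}(f) ≤ ρ_h^{(m,q)}(f)/λ_h^{(m,p)}(g). -/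

import Mathlib

/-!
The maximum modulus `M_f` of a nonzero series is log-convex by Hadamard's three-lines theorem,
tends to `0` at `-∞` because all exponents are positive, and dominates every term `e^{σλₙ}‖aₙ‖`
by Bohr's mean-value formula for the coefficients. Hence `M_f` is a continuous increasing
bijection `ℝ → (0, ∞)`, and `x(σ) = M_g⁻¹(M_f σ)` is an increasing bijection of `ℝ`, so it maps
`atTop` onto `atTop`. Since `M_h⁻¹(M_f σ) = M_h⁻¹(M_g x)`,
`log^[m] M_h⁻¹(M_f σ) / log^[q] σ = (log^[p] x / log^[q] σ) · (log^[m] M_h⁻¹(M_g x) / log^[p] x)`,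
and the liminf and limsup of the last factor are `λ_h^{(m,p)}(g)` and `ρ_h^{(m,p)}(g)`. The six
inequalities are then the liminf/limsup bounds for a product of two nonnegative functions.
-/

open Filter Topology

noncomputable section

/-- An entire function given by an everywhere absolutely convergent
vector valued Dirichlet series, with coefficients in a Banach space `E`. -/
structure VVDS (E : Type*) [NormedAddCommGroup E] [NormedSpace ℂ E] [CompleteSpace E] where
  a : ℕ → E
  lam : ℕ → ℝ
  lam_pos : ∀ n, 0 < lam n
  lam_strictMono : StrictMono lam
  lam_tendsto : Tendsto lam atTop atTop
  log_index_bound : ∃ D : ℝ, ∀ᶠ n : ℕ in atTop, Real.log (n : ℝ) / lam n ≤ D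
  coeff_decay : Tendsto (fun n => Real.log ‖a n‖ / lam n) atTop atBot
  abs_conv : ∀ s : ℂ, Summable (fun n => Real.exp (s.re * lam n) * ‖a n‖)

variable {E F G : Type*} [NormedAddCommGroup E] [NormedSpace ℂ E] [CompleteSpace E]
  [NormedAddCommGroup F] [NormedSpace ℂ F] [CompleteSpace F]
  [NormedAddCommGroup G] [NormedSpace ℂ G] [CompleteSpace G]

/-- The entire function defined by the vector valued Dirichlet series. -/
def VVDS.toFun (f : VVDS E) (s : ℂ) : E := ∑' n, Complex.exp (s * (f.lam n : ℂ)) • f.a n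

/-- The maximum modulus function `M_f(σ) = sup_t ‖f(σ+it)‖`. -/
def VVDS.M (f : VVDS E) (σ : ℝ) : ℝ := ⨆ t : ℝ, ‖f.toFun ((σ : ℂ) + (t : ℂ) * Complex.I)‖

/-- The inverse function of the maximum modulus function. -/
def VVDS.Minv (f : VVDS E) (y : ℝ) : ℝ := sInf {σ : ℝ | y ≤ f.M σ}

/-- The (p,q)-th relative Ritt order of `f` with respect to `g`. -/
def relRittOrder (p q : ℕ) (f : VVDS E) (g : VVDS F) : EReal :=
  limsup (fun σ : ℝ =>
    ((Real.log^[p] (g.Minv (f.M σ)) / Real.log^[q] σ : ℝ) : EReal)) atTop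

/-- The (p,q)-th relative Ritt lower order of `f` with respect to `g`. -/
def relRittLowerOrder (p q : ℕ) (f : VVDS E) (g : VVDS F) : EReal :=
  liminf (fun σ : ℝ =>
    ((Real.log^[p] (g.Minv (f.M σ)) / Real.log^[q] σ : ℝ) : EReal)) atTop

/-- The (p,q)-th relative Ritt type of `f` with respect to `g`. -/
def relRittType (p q : ℕ) (f : VVDS E) (g : VVDS F) : EReal :=
  limsup (fun σ : ℝ =>
    ((Real.log^[p-1] (g.Minv (f.M σ)) /
      (Real.log^[q-1] σ) ^ (relRittOrder p q f g).toReal : ℝ) : EReal)) atTop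

/-- The (p,q)-th relative Ritt lower type of `f` with respect to `g`. -/
def relRittLowerType (p q : ℕ) (f : VVDS E) (g : VVDS F) : EReal :=
  liminf (fun σ : ℝ =>
    ((Real.log^[p-1] (g.Minv (f.M σ)) /
      (Real.log^[q-1] σ) ^ (relRittOrder p q f g).toReal : ℝ) : EReal)) atTop

/-- The (p,q)-th relative Ritt weak type of `f` with respect to `g`. -/
def relRittWeakType (p q : ℕ) (f : VVDS E) (g : VVDS F) : EReal :=
  liminf (fun σ : ℝ =>
    ((Real.log^[p-1] (g.Minv (f.M σ)) /
      (Real.log^[q-1] σ) ^ (relRittLowerOrder p q f g).toReal : ℝ) : EReal)) atTop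

/-- The growth indicator `τ̄_g^{(p,q)}(f)`. -/
def relRittUpperWeakType (p q : ℕ) (f : VVDS E) (g : VVDS F) : EReal :=
  limsup (fun σ : ℝ =>
    ((Real.log^[p-1] (g.Minv (f.M σ)) /
      (Real.log^[q-1] σ) ^ (relRittLowerOrder p q f g).toReal : ℝ) : EReal)) atTop

open Complex MeasureTheory

lemma ConvexOn.strictMono_of_tendsto_atBot {φ : ℝ → ℝ} (hφ : ConvexOn ℝ Set.univ φ)
    (hbot : Tendsto φ atBot atBot) : StrictMono φ := by
  intro x y hxy
  obtain ⟨z, hzx, hz⟩ := ((eventually_lt_atBot x).and (hbot.eventually_lt_atBot (φ x))).exists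
  have hslope := hφ.slope_mono_adjacent (Set.mem_univ z) (Set.mem_univ y) hzx hxy
  have hpos : 0 < (φ x - φ z) / (x - z) := div_pos (by linarith) (by linarith)
  have := hpos.trans_le hslope
  rw [div_pos_iff_of_pos_right (by linarith)] at this
  linarith

lemma norm_integral_cexp_mul_I_le (ω : ℝ) {T : ℝ} (hT : 0 ≤ T) :
    ‖∫ t in -T..T, cexp (ω * t * I)‖ ≤ 2 * T := by
  have h := intervalIntegral.norm_integral_le_of_norm_le_const (a := -T) (b := T) (C := 1)
    (f := fun t : ℝ => cexp (ω * t * I)) fun t _ => by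
      simpa using (Complex.norm_exp_ofReal_mul_I (ω * t)).le
  rwa [one_mul, abs_of_nonneg (by linarith), sub_neg_eq_add, ← two_mul] at h

lemma tendsto_mean_cexp_mul_I (ω : ℝ) :
    Tendsto (fun T : ℝ => (2 * T)⁻¹ • ∫ t in -T..T, cexp (ω * t * I)) atTop
      (𝓝 (if ω = 0 then 1 else 0)) := by
  split_ifs with hω
  · refine tendsto_const_nhds.congr' ?_
    filter_upwards [eventually_gt_atTop 0] with T hT
    simp only [hω, ofReal_zero, zero_mul, exp_zero, intervalIntegral.integral_const, smul_smul]
    rw [sub_neg_eq_add, ← two_mul, inv_mul_cancel₀ (by positivity), one_smul]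
  · have hωI : (ω : ℂ) * I ≠ 0 := mul_ne_zero (by exact_mod_cast hω) I_ne_zero
    have hint : ∀ T : ℝ, ‖∫ t in -T..T, cexp (ω * t * I)‖ ≤ 2 / |ω| := fun T => by
      simp_rw [mul_right_comm (ω : ℂ), integral_exp_mul_complex hωI, norm_div, norm_mul,
        norm_I, mul_one, norm_real, Real.norm_eq_abs]
      gcongr
      refine (norm_sub_le _ _).trans_eq ?_
      rw [mul_right_comm, mul_right_comm _ I, ← ofReal_mul, ← ofReal_mul,
        norm_exp_ofReal_mul_I, norm_exp_ofReal_mul_I, one_add_one_eq_two]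
    have hlim : Tendsto (fun T : ℝ => (2 * T)⁻¹ * (2 / |ω|)) atTop (𝓝 0) := by
      simpa using (tendsto_inv_atTop_zero.comp
        (tendsto_id.const_mul_atTop two_pos)).mul_const (2 / |ω|)
    refine squeeze_zero_norm' ?_ hlim
    filter_upwards [eventually_gt_atTop 0] with T hT
    rw [norm_smul, Real.norm_of_nonneg (by positivity)]
    exact mul_le_mul_of_nonneg_left (hint T) (by positivity)

lemma tendsto_mean_tsum_cexp_smul {c : ℕ → E} (hc : Summable fun n => ‖c n‖) (ω : ℕ → ℝ) :
    Tendsto (fun T : ℝ => (2 * T)⁻¹ • ∫ t in -T..T, ∑' n, cexp (ω n * t * I) • c n) atTop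
      (𝓝 (∑' n, if ω n = 0 then c n else 0)) := by
  have hswap : ∀ T : ℝ, ∫ t in -T..T, ∑' n, cexp (ω n * t * I) • c n =
      ∑' n, (∫ t in -T..T, cexp (ω n * t * I)) • c n := fun T => by
    simp_rw [← intervalIntegral.integral_smul_const]
    refine (intervalIntegral.hasSum_integral_of_dominated_convergence (fun n _ => ‖c n‖)
      (fun n => by fun_prop) (fun n => ae_of_all _ fun t _ => ?_) (ae_of_all _ fun _ _ => hc)
      intervalIntegrable_const (ae_of_all _ fun t _ => ?_)).tsum_eq.symm
    · rw [norm_smul, ← ofReal_mul, norm_exp_ofReal_mul_I, one_mul]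
    · refine Summable.hasSum (Summable.of_norm ?_)
      simpa only [norm_smul, ← ofReal_mul, norm_exp_ofReal_mul_I, one_mul] using hc
  simp_rw [hswap, ← tsum_const_smul'', ← smul_assoc]
  convert tendsto_tsum_of_dominated_convergence hc
    (fun n => (tendsto_mean_cexp_mul_I (ω n)).smul_const (c n)) ?_ using 2
  · exact tsum_congr fun n => by split_ifs <;> simp
  · filter_upwards [eventually_gt_atTop 0] with T hT n
    rw [norm_smul, norm_smul, Real.norm_of_nonneg (by positivity)]
    refine mul_le_of_le_one_left (norm_nonneg _) ?_
    rw [inv_mul_le_iff₀ (by positivity), mul_one]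
    exact norm_integral_cexp_mul_I_le _ hT.le

namespace VVDS

variable (f : VVDS E)

lemma norm_cexp_smul_coeff (s : ℂ) (n : ℕ) :
    ‖cexp (s * f.lam n) • f.a n‖ = Real.exp (s.re * f.lam n) * ‖f.a n‖ := by
  rw [norm_smul, Complex.norm_exp, re_mul_ofReal]

lemma summable_norm_cexp_smul_coeff (s : ℂ) : Summable fun n => ‖cexp (s * f.lam n) • f.a n‖ := by
  simpa only [norm_cexp_smul_coeff] using f.abs_conv s

lemma norm_toFun_le (s : ℂ) : ‖f.toFun s‖ ≤ ∑' n, Real.exp (s.re * f.lam n) * ‖f.a n‖ :=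
  (norm_tsum_le_tsum_norm (f.summable_norm_cexp_smul_coeff s)).trans_eq
    (by simp only [norm_cexp_smul_coeff])

lemma monotone_tsum_exp_mul_norm_coeff :
    Monotone fun σ : ℝ => ∑' n, Real.exp (σ * f.lam n) * ‖f.a n‖ :=
  fun σ τ hστ => by
    refine Summable.tsum_le_tsum (fun n => ?_) (by simpa using f.abs_conv σ)
      (by simpa using f.abs_conv τ)
    gcongr
    exact (f.lam_pos n).le

lemma differentiable_toFun : Differentiable ℂ f.toFun := by
  intro z
  have hU : IsOpen {s : ℂ | s.re < z.re + 1} := isOpen_lt continuous_re continuous_const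
  refine (differentiableOn_tsum_of_summable_norm
    (by simpa using f.abs_conv (z.re + 1 : ℝ))
    (fun n => by fun_prop) hU fun n s hs => ?_).differentiableAt
    (hU.mem_nhds (by simp))
  rw [norm_cexp_smul_coeff]
  gcongr
  · exact (f.lam_pos n).le
  · exact le_of_lt hs

lemma bddAbove_norm_toFun (σ : ℝ) :
    BddAbove (Set.range fun t : ℝ => ‖f.toFun (σ + t * I)‖) :=
  ⟨_, Set.forall_mem_range.2 fun t => by simpa using f.norm_toFun_le (σ + t * I)⟩

lemma norm_toFun_le_M (z : ℂ) : ‖f.toFun z‖ ≤ f.M z.re := by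
  have h := le_ciSup (f.bddAbove_norm_toFun z.re) z.im
  rwa [re_add_im] at h

lemma M_nonneg (σ : ℝ) : 0 ≤ f.M σ :=
  Real.iSup_nonneg fun _ => norm_nonneg _

-- Bohr: the mean of `e^{-iλₖt} f(σ + it)` over `t ∈ [-T, T]` tends to `e^{σλₖ} aₖ`.
lemma exp_mul_norm_coeff_le_M (k : ℕ) (σ : ℝ) :
    Real.exp (σ * f.lam k) * ‖f.a k‖ ≤ f.M σ := by
  set c : ℕ → E := fun n => cexp (σ * f.lam n) • f.a n
  have hc : Summable fun n => ‖c n‖ := by simpa [c] using f.summable_norm_cexp_smul_coeff σ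
  have hseries : ∀ t : ℝ, cexp (-(f.lam k * t * I)) • f.toFun (σ + t * I) =
      ∑' n, cexp ((f.lam n - f.lam k : ℝ) * t * I) • c n := fun t => by
    rw [toFun, ← (Summable.of_norm (f.summable_norm_cexp_smul_coeff _)).tsum_const_smul]
    refine tsum_congr fun n => ?_
    simp only [c, smul_smul, ← Complex.exp_add]
    push_cast
    ring_nf
  have hsum : (∑' n, if f.lam n - f.lam k = 0 then c n else 0) = c k := by
    refine (tsum_eq_single k fun n hn => if_neg ?_).trans (if_pos (sub_self _))
    exact sub_ne_zero.2 (f.lam_strictMono.injective.ne hn)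
  have hlim := tendsto_mean_tsum_cexp_smul hc fun n => f.lam n - f.lam k
  simp_rw [← hseries, hsum] at hlim
  have hck : ‖c k‖ = Real.exp (σ * f.lam k) * ‖f.a k‖ := by simpa using f.norm_cexp_smul_coeff σ k
  refine hck ▸ le_of_tendsto hlim.norm ?_
  filter_upwards [eventually_gt_atTop 0] with T hT
  have hint := intervalIntegral.norm_integral_le_of_norm_le_const (a := -T) (b := T)
    (C := f.M σ) (f := fun t : ℝ => cexp (-(f.lam k * t * I)) • f.toFun (σ + t * I))
    fun t _ => by
      rw [norm_smul, ← neg_mul, ← ofReal_mul, ← ofReal_neg, norm_exp_ofReal_mul_I, one_mul]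
      simpa using f.norm_toFun_le_M (σ + t * I)
  rw [norm_smul, Real.norm_of_nonneg (by positivity), inv_mul_le_iff₀ (by positivity)]
  rw [abs_of_pos (by linarith), sub_neg_eq_add, ← two_mul] at hint
  linarith

lemma tendsto_M_atBot : Tendsto f.M atBot (𝓝 0) := by
  have hsum : Tendsto (fun σ : ℝ => ∑' n, Real.exp (σ * f.lam n) * ‖f.a n‖) atBot
      (𝓝 (∑' _ : ℕ, (0 : ℝ))) := by
    refine tendsto_tsum_of_dominated_convergence (by simpa using f.abs_conv 0)
      (fun n => ?_) ?_
    · simpa using (Real.tendsto_exp_atBot.comp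
        (tendsto_id.atBot_mul_const (f.lam_pos n))).mul_const ‖f.a n‖
    · filter_upwards [eventually_le_atBot 0] with σ hσ n
      rw [Real.norm_of_nonneg (by positivity)]
      exact mul_le_of_le_one_left (norm_nonneg _)
        (Real.exp_le_one_iff.2 (mul_nonpos_of_nonpos_of_nonneg hσ (f.lam_pos n).le))
  rw [tsum_zero] at hsum
  refine squeeze_zero f.M_nonneg (fun σ => Real.iSup_le (fun t => ?_) ?_) hsum
  · simpa using f.norm_toFun_le (σ + t * I)
  · exact tsum_nonneg fun n => by positivity

lemma M_le_rpow_mul_rpow {x y a b : ℝ} (hxy : x < y) (ha : 0 < a) (hb : 0 < b)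
    (hab : a + b = 1) :
    f.M (a * x + b * y) ≤ f.M x ^ a * f.M y ^ b := by
  obtain rfl : a = 1 - b := by linarith
  refine Real.iSup_le (fun t => ?_) (by have := f.M_nonneg x; have := f.M_nonneg y; positivity)
  have hre : (((1 - b) * x + b * y : ℝ) + t * I : ℂ).re = (1 - b) * x + b * y := by simp
  have hθ : ((1 - b) * x + b * y - x) / (y - x) = b := by
    rw [div_eq_iff (sub_ne_zero.2 hxy.ne')]; ring
  have h := Complex.HadamardThreeLines.norm_le_interp_of_mem_verticalClosedStrip'
    (f := f.toFun) (z := ((1 - b) * x + b * y : ℝ) + t * I) (l := x) (u := y)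
    (a := f.M x) (b := f.M y) hxy ?_ f.differentiable_toFun.diffContOnCl ?_ ?_ ?_
  · rwa [hre, hθ] at h
  · rw [Complex.HadamardThreeLines.verticalClosedStrip, Set.mem_preimage, hre]
    constructor <;> nlinarith
  · refine ⟨_, Set.forall_mem_image.2 fun w hw => (f.norm_toFun_le w).trans
      (f.monotone_tsum_exp_mul_norm_coeff hw.2)⟩
  · exact fun z hz => hz ▸ f.norm_toFun_le_M z
  · exact fun z hz => hz ▸ f.norm_toFun_le_M z

section Nontrivial

variable {f} (hf : ∃ n, f.a n ≠ 0)
include hf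

lemma M_pos (σ : ℝ) : 0 < f.M σ := by
  obtain ⟨n, hn⟩ := hf
  exact (by positivity : 0 < Real.exp (σ * f.lam n) * ‖f.a n‖).trans_le
    (f.exp_mul_norm_coeff_le_M n σ)

lemma tendsto_M_atTop : Tendsto f.M atTop atTop := by
  obtain ⟨n, hn⟩ := hf
  exact tendsto_atTop_mono (f.exp_mul_norm_coeff_le_M n) <|
    (Real.tendsto_exp_atTop.comp (tendsto_id.atTop_mul_const (f.lam_pos n))).atTop_mul_const
      (norm_pos_iff.2 hn)

lemma convexOn_log_M : ConvexOn ℝ Set.univ fun σ => Real.log (f.M σ) := by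
  refine LinearOrder.convexOn_of_lt convex_univ fun x _ y _ hxy a b ha hb hab => ?_
  have hx := M_pos hf x
  have hy := M_pos hf y
  calc Real.log (f.M (a • x + b • y)) ≤ Real.log (f.M x ^ a * f.M y ^ b) :=
        Real.log_le_log (M_pos hf _) (f.M_le_rpow_mul_rpow hxy ha hb hab)
    _ = a • Real.log (f.M x) + b • Real.log (f.M y) := by
        rw [Real.log_mul (by positivity) (by positivity), Real.log_rpow hx, Real.log_rpow hy,
          smul_eq_mul, smul_eq_mul]

lemma tendsto_log_M_atBot : Tendsto (fun σ => Real.log (f.M σ)) atBot atBot :=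
  Real.tendsto_log_nhdsGT_zero.comp <|
    tendsto_nhdsWithin_iff.2 ⟨f.tendsto_M_atBot, Eventually.of_forall (M_pos hf)⟩

lemma strictMono_M : StrictMono f.M := by
  have h := (convexOn_log_M hf).strictMono_of_tendsto_atBot (tendsto_log_M_atBot hf)
  exact fun x y hxy => (Real.log_lt_log_iff (M_pos hf x) (M_pos hf y)).1 (h hxy)

lemma continuous_M : Continuous f.M := by
  have h := continuousOn_univ.1 ((convexOn_log_M hf).continuousOn isOpen_univ)
  simpa [Function.comp_def, Real.exp_log (M_pos hf _)] using Real.continuous_exp.comp h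

lemma Minv_M (σ : ℝ) : f.Minv (f.M σ) = σ := by
  have hset : {τ | f.M σ ≤ f.M τ} = Set.Ici σ := Set.ext fun τ => (strictMono_M hf).le_iff_le
  rw [Minv, hset, csInf_Ici]

lemma M_Minv {y : ℝ} (hy : 0 < y) : f.M (f.Minv y) = y := by
  obtain ⟨σ, rfl⟩ := mem_range_of_exists_le_of_exists_ge (continuous_M hf)
    ((f.tendsto_M_atBot.eventually (ge_mem_nhds hy)).exists)
    ((tendsto_M_atTop hf).eventually_ge_atTop y).exists
  rw [Minv_M hf]

lemma tendsto_Minv_atTop : Tendsto f.Minv atTop atTop :=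
  tendsto_atTop_atTop.2 fun σ => ⟨f.M σ, fun y hy => (strictMono_M hf).le_iff_le.1 <| by
    rwa [M_Minv hf ((M_pos hf σ).trans_le hy)]⟩

end Nontrivial

end VVDS

namespace EReal

variable {ι : Type*} {l : Filter ι} {u v : ι → EReal}

lemma liminf_mul_div_limsup_le [l.NeBot] (hu : 0 ≤ᶠ[l] u) (hv : 0 ≤ᶠ[l] v)
    (h0 : 0 < limsup v l) (htop : limsup v l ≠ ⊤) :
    liminf (u * v) l / limsup v l ≤ liminf u l := by
  rw [div_le_iff_le_mul h0 htop, mul_comm u]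
  exact liminf_mul_le hv hu (Or.inl h0.ne') (Or.inl htop)

lemma liminf_le_liminf_mul_div (hu : 0 ≤ᶠ[l] u) (hv : 0 ≤ᶠ[l] v)
    (h0 : 0 < liminf v l) (htop : liminf v l ≠ ⊤) :
    liminf u l ≤ liminf (u * v) l / liminf v l := by
  rw [le_div_iff_mul_le h0 htop]
  exact le_liminf_mul hu hv

lemma liminf_le_limsup_mul_div [l.NeBot] (hu : 0 ≤ᶠ[l] u) (hv : 0 ≤ᶠ[l] v)
    (h0 : 0 < limsup v l) (htop : limsup v l ≠ ⊤) :
    liminf u l ≤ limsup (u * v) l / limsup v l := by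
  rw [le_div_iff_mul_le h0 htop, mul_comm, mul_comm u]
  exact le_limsup_mul hv.frequently hu

lemma limsup_le_limsup_mul_div [l.NeBot] (hu : 0 ≤ᶠ[l] u) (hv : 0 ≤ᶠ[l] v)
    (h0 : 0 < liminf v l) (htop : liminf v l ≠ ⊤) :
    limsup u l ≤ limsup (u * v) l / liminf v l := by
  rw [le_div_iff_mul_le h0 htop]
  exact le_limsup_mul hu.frequently hv

lemma limsup_mul_div_limsup_le [l.NeBot] (hu : 0 ≤ᶠ[l] u) (hv : 0 ≤ᶠ[l] v)
    (h0 : 0 < limsup v l) (htop : limsup v l ≠ ⊤) :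
    limsup (u * v) l / limsup v l ≤ limsup u l := by
  rw [div_le_iff_le_mul h0 htop, mul_comm (limsup v l)]
  exact limsup_mul_le hu.frequently hv (Or.inr htop) (Or.inr h0.ne')

lemma liminf_mul_div_liminf_le [l.NeBot] (hu : 0 ≤ᶠ[l] u) (hv : 0 ≤ᶠ[l] v)
    (h0 : 0 < liminf v l) (htop : liminf v l ≠ ⊤) :
    liminf (u * v) l / liminf v l ≤ limsup u l := by
  rw [div_le_iff_le_mul h0 htop, mul_comm (liminf v l)]
  exact liminf_mul_le hu hv (Or.inr htop) (Or.inr h0.ne')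

end EReal

def relRittRatio (p q : ℕ) (f : VVDS E) (g : VVDS F) (σ : ℝ) : ℝ :=
  Real.log^[p] (g.Minv (f.M σ)) / Real.log^[q] σ

lemma exists_coeff_ne_zero_of_relRittLowerOrder_pos {p q : ℕ} {f : VVDS E} {g : VVDS F}
    (hpos : 0 < relRittLowerOrder p q f g) : ∃ n, f.a n ≠ 0 := by
  by_contra! hf
  have hM : ∀ σ, f.M σ = 0 := fun σ => by simp [VVDS.M, VVDS.toFun, hf]
  have hlim : Tendsto (fun σ => (relRittRatio p q f g σ : EReal)) atTop (𝓝 ((0 : ℝ) : EReal)) := by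
    refine EReal.tendsto_coe.2 <| ((tendsto_const_nhds (x := Real.log^[p] (g.Minv 0))).div_atTop
      (Real.tendsto_log_atTop.iterate q)).congr fun σ => ?_
    rw [relRittRatio, hM]
  exact hpos.ne' hlim.liminf_eq

lemma relRittLowerOrder_eq_liminf (p q : ℕ) (f : VVDS E) (g : VVDS F) :
    relRittLowerOrder p q f g = liminf (fun σ => (relRittRatio p q f g σ : EReal)) atTop := rfl

lemma relRittOrder_eq_limsup (p q : ℕ) (f : VVDS E) (g : VVDS F) :
    relRittOrder p q f g = limsup (fun σ => (relRittRatio p q f g σ : EReal)) atTop := rfl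

section

variable {f : VVDS E} {g : VVDS F} (hf : ∃ n, f.a n ≠ 0) (hg : ∃ n, g.a n ≠ 0)
include hf hg

lemma tendsto_Minv_comp_M : Tendsto (fun σ => g.Minv (f.M σ)) atTop atTop :=
  (VVDS.tendsto_Minv_atTop hg).comp (VVDS.tendsto_M_atTop hf)

lemma map_Minv_comp_M : map (fun σ => g.Minv (f.M σ)) atTop = atTop :=
  map_eq_of_inverse (fun τ => f.Minv (g.M τ))
    (funext fun τ => by simp [VVDS.M_Minv hf (VVDS.M_pos hg τ), VVDS.Minv_M hg])
    (tendsto_Minv_comp_M hf hg) (tendsto_Minv_comp_M hg hf)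

lemma relRittRatio_eventuallyEq_mul (h : VVDS G) (p q m : ℕ) :
    relRittRatio m q f h =ᶠ[atTop]
      fun σ => relRittRatio p q f g σ * relRittRatio m p g h (g.Minv (f.M σ)) := by
  filter_upwards [((Real.tendsto_log_atTop.iterate p).comp
    (tendsto_Minv_comp_M hf hg)).eventually_ne_atTop 0] with σ hσ
  simp only [Function.comp_apply] at hσ
  simp only [relRittRatio, VVDS.M_Minv hg (VVDS.M_pos hf σ)]
  field_simp

lemma liminf_comp_Minv_comp_M {α : Type*} [ConditionallyCompleteLattice α] (w : ℝ → α) :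
    liminf (fun σ => w (g.Minv (f.M σ))) atTop = liminf w atTop := by
  conv_rhs => rw [← map_Minv_comp_M hf hg]
  rfl

lemma limsup_comp_Minv_comp_M {α : Type*} [ConditionallyCompleteLattice α] (w : ℝ → α) :
    limsup (fun σ => w (g.Minv (f.M σ))) atTop = limsup w atTop := by
  conv_rhs => rw [← map_Minv_comp_M hf hg]
  rfl

theorem relRittOrder_bounds (h : VVDS G) (p q m : ℕ) (hc : 0 < relRittLowerOrder m p g h)
    (hcd : relRittLowerOrder m p g h ≤ relRittOrder m p g h) (hd : relRittOrder m p g h ≠ ⊤) :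
    relRittLowerOrder m q f h / relRittOrder m p g h ≤ relRittLowerOrder p q f g ∧
    relRittLowerOrder p q f g ≤ min (relRittLowerOrder m q f h / relRittLowerOrder m p g h)
      (relRittOrder m q f h / relRittOrder m p g h) ∧
    max (relRittLowerOrder m q f h / relRittLowerOrder m p g h)
      (relRittOrder m q f h / relRittOrder m p g h) ≤ relRittOrder p q f g ∧
    relRittOrder p q f g ≤ relRittOrder m q f h / relRittLowerOrder m p g h := by
  let u : ℝ → EReal := fun σ => relRittRatio p q f g σ
  let v : ℝ → EReal := fun σ => relRittRatio m p g h (g.Minv (f.M σ))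
  have huv : u * v =ᶠ[atTop] fun σ => (relRittRatio m q f h σ : EReal) :=
    (relRittRatio_eventuallyEq_mul hf hg h p q m).mono fun σ hσ => by
      simp [u, v, hσ, EReal.coe_mul]
  have hv_liminf : liminf v atTop = relRittLowerOrder m p g h := by
    rw [relRittLowerOrder_eq_liminf]
    exact liminf_comp_Minv_comp_M hf hg fun τ => (relRittRatio m p g h τ : EReal)
  have hv_limsup : limsup v atTop = relRittOrder m p g h := by
    rw [relRittOrder_eq_limsup]
    exact limsup_comp_Minv_comp_M hf hg fun τ => (relRittRatio m p g h τ : EReal)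
  have huv_liminf : liminf (u * v) atTop = relRittLowerOrder m q f h := by
    rw [relRittLowerOrder_eq_liminf]; exact liminf_congr huv
  have huv_limsup : limsup (u * v) atTop = relRittOrder m q f h := by
    rw [relRittOrder_eq_limsup]; exact limsup_congr huv
  have hu : 0 ≤ᶠ[atTop] u := by
    filter_upwards [((Real.tendsto_log_atTop.iterate p).comp
      (tendsto_Minv_comp_M hf hg)).eventually_ge_atTop 0,
      (Real.tendsto_log_atTop.iterate q).eventually_ge_atTop 0] with σ hp hq
    exact EReal.coe_nonneg.2 (div_nonneg hp hq)
  rw [← hv_liminf] at hc hcd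
  rw [← hv_limsup] at hcd hd
  have hv : 0 ≤ᶠ[atTop] v := (eventually_lt_of_lt_liminf hc).mono fun _ h => h.le
  have hctop : liminf v atTop ≠ ⊤ := ne_top_of_le_ne_top hd hcd
  have hd0 : 0 < limsup v atTop := hc.trans_le hcd
  rw [relRittLowerOrder_eq_liminf p q f g, relRittOrder_eq_limsup p q f g, ← hv_liminf,
    ← hv_limsup, ← huv_liminf, ← huv_limsup]
  exact ⟨EReal.liminf_mul_div_limsup_le hu hv hd0 hd,
    le_min (EReal.liminf_le_liminf_mul_div hu hv hc hctop)
      (EReal.liminf_le_limsup_mul_div hu hv hd0 hd),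
    max_le (EReal.liminf_mul_div_liminf_le hu hv hc hctop)
      (EReal.limsup_mul_div_limsup_le hu hv hd0 hd),
    EReal.limsup_le_limsup_mul_div hu hv hc hctop⟩

end

theorem stmt_0 (f : VVDS E) (g : VVDS F) (h : VVDS G) (p q m : ℕ)
    (hf1 : (0 : EReal) < relRittLowerOrder m q f h)
    (hf2 : relRittLowerOrder m q f h ≤ relRittOrder m q f h)
    (hf3 : relRittOrder m q f h < ⊤)
    (hg1 : (0 : EReal) < relRittLowerOrder m p g h)
    (hg2 : relRittLowerOrder m p g h ≤ relRittOrder m p g h)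
    (hg3 : relRittOrder m p g h < ⊤)
    :
    (((relRittLowerOrder m q f h).toReal / (relRittOrder m p g h).toReal : ℝ) : EReal) ≤ relRittLowerOrder p q f g ∧ relRittLowerOrder p q f g ≤ ((min ((relRittLowerOrder m q f h).toReal / (relRittLowerOrder m p g h).toReal) ((relRittOrder m q f h).toReal / (relRittOrder m p g h).toReal) : ℝ) : EReal) ∧ ((min ((relRittLowerOrder m q f h).toReal / (relRittLowerOrder m p g h).toReal) ((relRittOrder m q f h).toReal / (relRittOrder m p g h).toReal) : ℝ) : EReal) ≤ ((max ((relRittLowerOrder m q f h).toReal / (relRittLowerOrder m p g h).toReal) ((relRittOrder m q f h).toReal / (relRittOrder m p g h).toReal) : ℝ) : EReal) ∧ ((max ((relRittLowerOrder m q f h).toReal / (relRittLowerOrder m p g h).toReal) ((relRittOrder m q f h).toReal / (relRittOrder m p g h).toReal) : ℝ) : EReal) ≤ relRittOrder p q f g ∧ relRittOrder p q f g ≤ (((relRittOrder m q f h).toReal / (relRittLowerOrder m p g h).toReal : ℝ) : EReal) := by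
  have hfin : ∀ x : EReal, 0 < x → x < ⊤ → ((x.toReal : ℝ) : EReal) = x :=
    fun x h0 htop => EReal.coe_toReal htop.ne (EReal.bot_lt_zero.trans h0).ne'
  obtain ⟨h1, h2, h3, h4⟩ :=
    relRittOrder_bounds (exists_coeff_ne_zero_of_relRittLowerOrder_pos hf1)
      (exists_coeff_ne_zero_of_relRittLowerOrder_pos hg1) h p q m hg1 hg2 hg3.ne
  rw [EReal.coe_strictMono.monotone.map_min, EReal.coe_strictMono.monotone.map_max]
  simp only [EReal.coe_div, hfin _ hf1 (hf2.trans_lt hf3), hfin _ (hf1.trans_le hf2) hf3,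
    hfin _ hg1 (hg2.trans_lt hg3), hfin _ (hg1.trans_le hg2) hg3]
  exact ⟨h1, h2, min_le_max, h3, h4⟩
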